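/- arXiv:1812.10820 — 3 statements merged into one kernel-verified Lean document; each statement's English description precedes it below -/
import Mathlib

section
/- Suppose X_t = 1_N θ_t + Z_t for 1 ≤ t ≤ T, where θ_t ∈ ℝ, Z_t ∈ ℝ^N with E(Z_t) = μ constant in t, and Y_t = X_t'w + α_t·1{t>T0} + u_t with 1_N'w = 1. If ŵ satisfies 1_N'ŵ = 1, then with Δ = ŵ − w and Z̃_t = Z_t − μ, the cross-fitted estimator satisfies τ̂_k − τ = ((1/T1)Σ_{t=T0+1}^T u_t − (1/|H_k|)Σ_{t∈H_k} u_t) + ((1/|H_k|)Σ_{t∈H_k} Z̃_t − (1/T1)Σ_{t=T0+1}^T Z̃_t)'Δ; in particular the nonstationary component θ_t cancels. -/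
open Finset

/-!
Write `Δ = ŵ - w`. Since `1'Δ = 0`, the common component `θ_t 1_N` of `X_t` is annihilated by
`Δ`, so the residual is `Y_t - X_t'ŵ = -Z̃_t'Δ - μ'Δ + α_t 1{t > T0} + u_t`. Averaging over the
post-treatment period and over `H_k`, the constant `μ'Δ` appears in both averages and cancels
in their difference, leaving only the `u` and `Z̃` terms.
-/

variable {ι κ : Type*} [Fintype ι]

theorem sum_add_const_mul_sub_eq_of_sum_eq (θ : ℝ) (z μ w w' : ι → ℝ)
    (h : ∑ i, w' i = ∑ i, w i) :
    ∑ i, (θ + z i) * w i - ∑ i, (θ + z i) * w' i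
      = ∑ i, (z i - μ i) * (w i - w' i) + ∑ i, μ i * (w i - w' i) := by
  have hθ : ∑ i, θ * (w i - w' i) = 0 := by rw [← mul_sum, sum_sub_distrib, h, sub_self, mul_zero]
  calc ∑ i, (θ + z i) * w i - ∑ i, (θ + z i) * w' i
      = ∑ i, (θ * (w i - w' i) + ((z i - μ i) * (w i - w' i) + μ i * (w i - w' i))) := by
        rw [← sum_sub_distrib]; exact sum_congr rfl fun i _ => by ring
    _ = ∑ i, (z i - μ i) * (w i - w' i) + ∑ i, μ i * (w i - w' i) := by
        rw [sum_add_distrib, hθ, zero_add, sum_add_distrib]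

theorem sum_sub_sum_mul_eq (s s' : Finset κ) (a b : ℝ) (f : κ → ι → ℝ) (d : ι → ℝ) :
    ∑ i, (a * ∑ t ∈ s, f t i - b * ∑ t ∈ s', f t i) * d i
      = a * ∑ t ∈ s, ∑ i, f t i * d i - b * ∑ t ∈ s', ∑ i, f t i * d i := by
  simp only [sub_mul, sum_sub_distrib, mul_assoc, sum_mul, ← mul_sum]
  rw [sum_comm, sum_comm (s := s')]

/-- Cross-fitting decomposition with a common nonstationary
component (Lemma 5 of the paper): under the adding-up constraint, the
common trend `θ_t` cancels and the decomposition involves only `Z̃_t`. -/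
theorem crossfit_decomposition_nonstationary
    (N T0 T1 : ℕ) (hT1 : 0 < T1)
    (Hk : Finset ℕ) (hHk : Hk ⊆ Finset.Icc 1 T0) (hne : Hk.Nonempty)
    (θ : ℕ → ℝ) (Z X : ℕ → Fin N → ℝ) (μ : Fin N → ℝ)
    (hX : ∀ t i, X t i = θ t + Z t i)
    (w what : Fin N → ℝ) (hw : ∑ i, w i = 1) (hwhat : ∑ i, what i = 1)
    (u α : ℕ → ℝ) (Y : ℕ → ℝ)
    (hY : ∀ t, Y t = (∑ i, X t i * w i) + (if T0 < t then α t else 0) + u t) :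
    (((1 / (T1 : ℝ)) * ∑ t ∈ Finset.Ioc T0 (T0 + T1), (Y t - ∑ i, X t i * what i)
        - (1 / (Hk.card : ℝ)) * ∑ t ∈ Hk, (Y t - ∑ i, X t i * what i))
      - (1 / (T1 : ℝ)) * ∑ t ∈ Finset.Ioc T0 (T0 + T1), α t)
    = ((1 / (T1 : ℝ)) * ∑ t ∈ Finset.Ioc T0 (T0 + T1), u t
        - (1 / (Hk.card : ℝ)) * ∑ t ∈ Hk, u t)
      + ∑ i, ((1 / (Hk.card : ℝ)) * (∑ t ∈ Hk, (Z t i - μ i))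
          - (1 / (T1 : ℝ)) * ∑ t ∈ Finset.Ioc T0 (T0 + T1), (Z t i - μ i))
            * (what i - w i) := by
  set S : ℕ → ℝ := fun t => ∑ i, (Z t i - μ i) * (what i - w i)
  set c : ℝ := ∑ i, μ i * (what i - w i)
  have hres : ∀ t, Y t - ∑ i, X t i * what i = -(S t + c) + (if T0 < t then α t else 0) + u t := by
    intro t
    have := sum_add_const_mul_sub_eq_of_sum_eq (θ t) (Z t) μ what w (hw.trans hwhat.symm)
    simp only [hY, hX] at this ⊢
    linarith
  have hpost : ∀ t ∈ Ioc T0 (T0 + T1), Y t - ∑ i, X t i * what i = -(S t + c) + α t + u t :=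
    fun t ht => by rw [hres, if_pos (mem_Ioc.mp ht).1]
  have hpre : ∀ t ∈ Hk, Y t - ∑ i, X t i * what i = -(S t + c) + 0 + u t :=
    fun t ht => by rw [hres, if_neg (not_lt.mpr (mem_Icc.mp (hHk ht)).2)]
  have hcard : ((Ioc T0 (T0 + T1)).card : ℝ) = T1 := by
    rw [Nat.card_Ioc, Nat.add_sub_cancel_left]
  have hT1' : (T1 : ℝ) ≠ 0 := by exact_mod_cast hT1.ne'
  have hHk' : (Hk.card : ℝ) ≠ 0 := by exact_mod_cast hne.card_pos.ne'
  rw [sum_congr rfl hpost, sum_congr rfl hpre, sum_sub_sum_mul_eq]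
  simp only [sum_add_distrib, sum_const, nsmul_eq_mul, hcard, sum_neg_distrib]
  field_simp
  ring
end

section
/- Let u_1, ..., u_T be a mean-zero covariance-stationary process with autocovariance γ(h) = E(u_t u_{t−h}) satisfying Σ_{h=1}^∞ h|γ(h)| < ∞. Partition {1,...,T} into K consecutive blocks H_1,...,H_K of equal length G = T/K and let β̂_k = G⁻¹Σ_{t∈H_k} u_t. Then for any l > k, |G·E(β̂_k β̂_l)| ≤ K T⁻¹ Σ_{h=1}^∞ h|γ(h)|; in particular the off-diagonal entries of the covariance matrix of √G(β̂_1,...,β̂_K) are O(T⁻¹). -/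
open MeasureTheory ProbabilityTheory Finset

/-!
Expanding the product of the two block sums, `G · E(β̂_k β̂_l) = G⁻¹ ∑_{s ∈ H_k} ∑_{t ∈ H_l} γ(t - s)`.
Since `H_k` lies entirely to the left of `H_l`, a lag `h` is realised by at most `h` pairs
`(s, t) ∈ H_k × H_l`: the left end `s` must lie in the last `h` points before `H_l` starts.
Hence the double sum is bounded by `∑_h h |γ(h)|`, and `G⁻¹ = K / T`.
-/

theorem Finset.sum_comp_le_tsum_of_card_fiber_le {α : Type*} {s : Finset α} {g : α → ℕ}
    {f : ℕ → ℝ} (hf : ∀ n, 0 ≤ f n) (hsum : Summable fun n : ℕ => (n : ℝ) * f n)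
    (hfiber : ∀ n, #{x ∈ s | g x = n} ≤ n) :
    ∑ x ∈ s, f (g x) ≤ ∑' n : ℕ, (n : ℝ) * f n := by
  rw [Finset.sum_comp]
  calc ∑ n ∈ s.image g, #{x ∈ s | g x = n} • f n
      ≤ ∑ n ∈ s.image g, (n : ℝ) * f n := by
        gcongr with n
        rw [nsmul_eq_mul]
        exact mul_le_mul_of_nonneg_right (mod_cast hfiber n) (hf n)
    _ ≤ ∑' n : ℕ, (n : ℝ) * f n :=
        hsum.sum_le_tsum _ fun n _ => mul_nonneg n.cast_nonneg (hf n)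

theorem Nat.card_filter_Ioc_prod_Ioc_sub_eq_le {a b c d : ℕ} (hbc : b ≤ c) (n : ℕ) :
    #{p ∈ Ioc a b ×ˢ Ioc c d | p.2 - p.1 = n} ≤ n := by
  set P : Finset (ℕ × ℕ) := {p ∈ Ioc a b ×ˢ Ioc c d | p.2 - p.1 = n}
  have hmaps : ∀ p ∈ P, p.1 ∈ Ioc (c - n) b := by
    intro p hp
    simp only [P, mem_filter, mem_product, mem_Ioc] at hp ⊢
    omega
  have hinj : Set.InjOn Prod.fst (P : Set (ℕ × ℕ)) := by
    intro p hp q hq hpq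
    simp only [P, coe_filter, mem_product, mem_Ioc, Set.mem_ofPred_eq] at hp hq
    exact Prod.ext hpq (by omega)
  calc _ ≤ #(Ioc (c - n) b) := card_le_card_of_injOn Prod.fst hmaps hinj
    _ ≤ n := by rw [Nat.card_Ioc]; omega

theorem abs_sum_Ioc_sum_Ioc_sub_le_tsum {a b c d : ℕ} (hbc : b ≤ c) {f : ℕ → ℝ}
    (hsum : Summable fun n : ℕ => (n : ℝ) * |f n|) :
    |∑ s ∈ Ioc a b, ∑ t ∈ Ioc c d, f (t - s)| ≤ ∑' n : ℕ, (n : ℝ) * |f n| :=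
  calc |∑ s ∈ Ioc a b, ∑ t ∈ Ioc c d, f (t - s)|
      ≤ ∑ s ∈ Ioc a b, ∑ t ∈ Ioc c d, |f (t - s)| :=
        (abs_sum_le_sum_abs _ _).trans (sum_le_sum fun _ _ => abs_sum_le_sum_abs _ _)
    _ = ∑ p ∈ Ioc a b ×ˢ Ioc c d, |f (p.2 - p.1)| := (sum_product' _ _ _).symm
    _ ≤ ∑' n : ℕ, (n : ℝ) * |f n| :=
        sum_comp_le_tsum_of_card_fiber_le (fun _ => abs_nonneg _) hsum
          (Nat.card_filter_Ioc_prod_Ioc_sub_eq_le hbc)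

theorem MeasureTheory.integral_sum_mul_sum {Ω ι κ : Type*} [MeasurableSpace Ω] {μ : Measure Ω}
    (s : Finset ι) (t : Finset κ) {X : ι → Ω → ℝ} {Y : κ → Ω → ℝ}
    (hint : ∀ i ∈ s, ∀ j ∈ t, Integrable (fun ω => X i ω * Y j ω) μ) :
    ∫ ω, (∑ i ∈ s, X i ω) * (∑ j ∈ t, Y j ω) ∂μ = ∑ i ∈ s, ∑ j ∈ t, ∫ ω, X i ω * Y j ω ∂μ := by
  simp_rw [sum_mul_sum]
  rw [integral_finsetSum _ fun i hi => integrable_finsetSum _ (hint i hi)]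
  exact sum_congr rfl fun i hi => integral_finsetSum _ (hint i hi)

theorem block_mean_covariance_bound_general
    {Ω : Type*} [MeasureSpace Ω]
    (K G : ℕ)
    (u : ℕ → Ω → ℝ) (γ : ℕ → ℝ)
    (hint : ∀ t1 t2, Integrable (fun ω => u t1 ω * u t2 ω) ℙ)
    (hcov : ∀ t1 t2, t1 ≤ t2 → (∫ ω, u t1 ω * u t2 ω ∂ℙ) = γ (t2 - t1))
    (hsum : Summable (fun h : ℕ => (h : ℝ) * |γ h|))
    (k l : ℕ) (hkl : k < l) (hl : l ≤ K) :
    |(G : ℝ) * ∫ ω, ((G : ℝ)⁻¹ * ∑ t ∈ Finset.Ioc ((k - 1) * G) (k * G), u t ω)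
        * ((G : ℝ)⁻¹ * ∑ t ∈ Finset.Ioc ((l - 1) * G) (l * G), u t ω) ∂ℙ|
      ≤ (K : ℝ) / ((K * G : ℕ) : ℝ) * ∑' h : ℕ, (h : ℝ) * |γ h| := by
  have hsep : k * G ≤ (l - 1) * G := Nat.mul_le_mul_right G (by omega)
  have hcross : ∫ ω, (∑ s ∈ Ioc ((k - 1) * G) (k * G), u s ω)
        * (∑ t ∈ Ioc ((l - 1) * G) (l * G), u t ω) ∂ℙ
      = ∑ s ∈ Ioc ((k - 1) * G) (k * G), ∑ t ∈ Ioc ((l - 1) * G) (l * G), γ (t - s) := by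
    rw [integral_sum_mul_sum _ _ fun s _ t _ => hint s t]
    refine sum_congr rfl fun s hs => sum_congr rfl fun t ht => hcov s t ?_
    rw [mem_Ioc] at hs ht
    omega
  have hK0 : (K : ℝ) ≠ 0 := by norm_cast; omega
  simp_rw [mul_mul_mul_comm, integral_const_mul, hcross]
  rw [← mul_assoc, abs_mul, abs_of_nonneg (by positivity), ← mul_inv, ← div_eq_mul_inv,
    div_self_mul_self', Nat.cast_mul, div_mul_cancel_left₀ hK0]
  exact mul_le_mul_of_nonneg_left (abs_sum_Ioc_sum_Ioc_sub_le_tsum hsep hsum) (by positivity)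

/-- covariance bound between block means of a covariance-stationary
process: for blocks `H_k`, `H_l` with `l > k`,
`|G·E(β̂_k β̂_l)| ≤ (K/T)·Σ_{h≥1} h|γ(h)|` where `T = KG`. -/
theorem block_mean_covariance_bound
    {Ω : Type*} [MeasureSpace Ω] [IsProbabilityMeasure (ℙ : Measure Ω)]
    (K G : ℕ) (hK : 2 ≤ K) (hG : 1 ≤ G)
    (u : ℕ → Ω → ℝ) (γ : ℕ → ℝ)
    (hmean : ∀ t, (∫ ω, u t ω ∂ℙ) = 0)
    (hint : ∀ t1 t2, Integrable (fun ω => u t1 ω * u t2 ω) ℙ)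
    (hcov : ∀ t1 t2, t1 ≤ t2 → (∫ ω, u t1 ω * u t2 ω ∂ℙ) = γ (t2 - t1))
    (hsum : Summable (fun h : ℕ => (h : ℝ) * |γ h|))
    (k l : ℕ) (hk : 1 ≤ k) (hkl : k < l) (hl : l ≤ K) :
    |(G : ℝ) * ∫ ω, ((G : ℝ)⁻¹ * ∑ t ∈ Finset.Ioc ((k - 1) * G) (k * G), u t ω)
        * ((G : ℝ)⁻¹ * ∑ t ∈ Finset.Ioc ((l - 1) * G) (l * G), u t ω) ∂ℙ|
      ≤ (K : ℝ) / ((K * G : ℕ) : ℝ) * ∑' h : ℕ, (h : ℝ) * |γ h| :=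
  block_mean_covariance_bound_general K G u γ hint hcov hsum k l hkl hl
end

section
/- Let Y = Xw + u with Y, u ∈ ℝ^T, X ∈ ℝ^{T×N}, and X = θ1_N' + Z + ξβ' where θ, ξ ∈ ℝ^T, Z ∈ ℝ^{T×N}, 1_N'w = 1, w ≥ 0, and β ∈ ℝ^N. Let ŵ minimize ‖Y − Xv‖₂² over {v : v ≥ 0, 1_N'v = 1} and set Δ = ŵ − w. If ‖Z'ξ‖_∞ ≤ λ₁‖ξ‖₂, |u'ξ| ≤ c₁‖ξ‖₂, ‖Z'u‖_∞ ≤ λ₂, ‖Z'Z − EZ'Z‖_∞ ≤ λ₃, and the eigenvalues of EZ'Z/T lie in [c₀⁻¹, c₀], then ‖Δ‖₂ ≤ √((c₀/T)[8λ₁² + 2c₁² + 4λ₂ + 4λ₃]). -/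
/-! With `Δ = ŵ - w`, comparing the objective at `ŵ` and at `w` gives the basic inequality
`‖XΔ‖² ≤ 2 u'XΔ`. Because `1'Δ = 0` the common trend drops out and `XΔ = ZΔ + (β'Δ) ξ`;
expanding and completing the square in the unknown scalar `β'Δ` removes it, leaving
`‖ZΔ‖² ≤ 8λ₁² + 2c₁² + 4λ₂`, since `‖Δ‖₁ ≤ 2` turns every `ℓ∞` bound on `Z'ξ`, `Z'u` into an
`ℓ∞–ℓ₁` pairing bound. Replacing `Z'Z` by `EZ'Z` costs `‖Δ‖₁² λ₃ ≤ 4λ₃`, and the smallest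
eigenvalue `T/c₀` of `EZ'Z` converts the bound on `Δ'EZ'ZΔ` into one on `‖Δ‖₂²`. -/

open Finset

variable {ι κ : Type*} [Fintype ι] [Fintype κ]

lemma nonempty_of_mem_stdSimplex {w : ι → ℝ} (hw : w ∈ stdSimplex ℝ ι) : Nonempty ι := by
  by_contra h
  rw [not_nonempty_iff] at h
  simp [stdSimplex_of_isEmpty_index] at hw

lemma sum_abs_sub_le_two_of_mem_stdSimplex {v w : ι → ℝ} (hv : v ∈ stdSimplex ℝ ι)
    (hw : w ∈ stdSimplex ℝ ι) : ∑ i, |v i - w i| ≤ 2 :=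
  calc ∑ i, |v i - w i| ≤ ∑ i, (v i + w i) := sum_le_sum fun i _ => by
        simpa only [abs_of_nonneg (hv.1 i), abs_of_nonneg (hw.1 i)] using abs_sub (v i) (w i)
    _ = 2 := by rw [sum_add_distrib, hv.2, hw.2]; norm_num

lemma abs_sum_mul_le_sum_abs_mul {δ g : ι → ℝ} {k : ℝ} (hg : ∀ i, |g i| ≤ k) :
    |∑ i, δ i * g i| ≤ (∑ i, |δ i|) * k :=
  calc |∑ i, δ i * g i| ≤ ∑ i, |δ i| * |g i| := by
        simpa only [abs_mul] using abs_sum_le_sum_abs (fun i => δ i * g i) univ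
    _ ≤ ∑ i, |δ i| * k := sum_le_sum fun i _ => mul_le_mul_of_nonneg_left (hg i) (abs_nonneg _)
    _ = (∑ i, |δ i|) * k := (sum_mul ..).symm

lemma abs_sum_mul_le_of_sum_abs_le [Nonempty ι] {δ g : ι → ℝ} {c k : ℝ}
    (hδ : ∑ i, |δ i| ≤ c) (hg : ∀ i, |g i| ≤ k) : |∑ i, δ i * g i| ≤ c * k :=
  (abs_sum_mul_le_sum_abs_mul hg).trans <|
    mul_le_mul_of_nonneg_right hδ ((abs_nonneg _).trans (hg (Classical.arbitrary ι)))

lemma abs_quadForm_le_of_sum_abs_le [Nonempty ι] {δ : ι → ℝ} {E : ι → ι → ℝ} {c k : ℝ}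
    (hδ : ∑ i, |δ i| ≤ c) (hE : ∀ i j, |E i j| ≤ k) :
    |∑ i, ∑ j, δ i * E i j * δ j| ≤ c * (c * k) := by
  have hrow : ∀ i, |∑ j, δ j * E i j| ≤ c * k := fun i =>
    abs_sum_mul_le_of_sum_abs_le hδ (hE i)
  have hform : ∑ i, ∑ j, δ i * E i j * δ j = ∑ i, δ i * ∑ j, δ j * E i j := by
    simp only [mul_sum]
    exact sum_congr rfl fun i _ => sum_congr rfl fun j _ => by ring
  rw [hform]
  exact abs_sum_mul_le_of_sum_abs_le hδ hrow

lemma sum_sq_le_two_mul_sum_mul_of_lsq {X : κ → ι → ℝ} {u Y : κ → ℝ} {w w' : ι → ℝ}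
    (hY : ∀ t, Y t = ∑ i, X t i * w i + u t)
    (hmin : ∑ t, (Y t - ∑ i, X t i * w' i) ^ 2 ≤ ∑ t, (Y t - ∑ i, X t i * w i) ^ 2) :
    ∑ t, (∑ i, X t i * (w' i - w i)) ^ 2 ≤ 2 * ∑ t, u t * ∑ i, X t i * (w' i - w i) := by
  set d : κ → ℝ := fun t => ∑ i, X t i * (w' i - w i)
  have hres : ∀ t, Y t - ∑ i, X t i * w' i = u t - d t := fun t => by
    simp only [d, mul_sub, sum_sub_distrib, hY]; ring
  have hres₀ : ∀ t, Y t - ∑ i, X t i * w i = u t := fun t => by rw [hY]; ring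
  simp only [hres, hres₀, sub_sq, sum_add_distrib, sum_sub_distrib, mul_assoc] at hmin
  rw [← mul_sum] at hmin
  show ∑ t, d t ^ 2 ≤ 2 * ∑ t, u t * d t
  linarith

lemma sum_mul_eq_add_of_sum_eq_zero {x z β δ : ι → ℝ} {θ ξ : ℝ}
    (hx : ∀ i, x i = θ + z i + ξ * β i) (hδ : ∑ i, δ i = 0) :
    ∑ i, x i * δ i = ∑ i, z i * δ i + (∑ i, β i * δ i) * ξ := by
  have : ∑ i, x i * δ i = θ * ∑ i, δ i + ∑ i, z i * δ i + ξ * ∑ i, β i * δ i := by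
    simp only [hx, add_mul, sum_add_distrib, mul_sum, mul_assoc]
  rw [this, hδ]; ring

lemma sum_mul_sum_mul_comm (Z : κ → ι → ℝ) (f : κ → ℝ) (δ : ι → ℝ) :
    ∑ t, f t * ∑ i, Z t i * δ i = ∑ i, δ i * ∑ t, Z t i * f t := by
  simp only [mul_sum]
  rw [sum_comm]
  exact sum_congr rfl fun i _ => sum_congr rfl fun t _ => by ring

lemma sum_sq_sum_mul_eq_quadForm (Z : κ → ι → ℝ) (δ : ι → ℝ) :
    ∑ t, (∑ i, Z t i * δ i) ^ 2 = ∑ i, ∑ j, δ i * (∑ t, Z t i * Z t j) * δ j := by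
  simp only [sq, mul_sum, sum_mul]
  rw [sum_comm]
  refine sum_congr rfl fun i _ => ?_
  rw [sum_comm]
  exact sum_congr rfl fun j _ => sum_congr rfl fun t _ => by ring

lemma quadForm_sub (A B : ι → ι → ℝ) (δ : ι → ℝ) :
    ∑ i, ∑ j, δ i * (A i j - B i j) * δ j =
      ∑ i, ∑ j, δ i * A i j * δ j - ∑ i, ∑ j, δ i * B i j * δ j := by
  simp only [mul_sub, sub_mul, sum_sub_distrib]

-- Completing the square in `|a| r` absorbs the cross term `2a(B - A)` into `a²r²`.
lemma le_of_add_two_mul_add_sq_mul_sq_le {Q a r A B C lam₁ c₁ lam₂ : ℝ}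
    (h : Q + 2 * a * A + a ^ 2 * r ^ 2 ≤ 2 * C + 2 * a * B)
    (hA : |A| ≤ 2 * (lam₁ * r)) (hB : |B| ≤ c₁ * r) (hC : |C| ≤ 2 * lam₂) :
    Q ≤ 8 * lam₁ ^ 2 + 2 * c₁ ^ 2 + 4 * lam₂ := by
  have hcross : 2 * a * (B - A) ≤ 2 * (|a| * r) * (2 * lam₁ + c₁) :=
    calc 2 * a * (B - A) ≤ 2 * |a| * |B - A| := by
          rw [mul_assoc, mul_assoc, ← abs_mul]; gcongr; exact le_abs_self _
      _ ≤ 2 * |a| * (|A| + |B|) := by gcongr; exact (abs_sub B A).trans_eq (add_comm _ _)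
      _ ≤ 2 * |a| * (2 * (lam₁ * r) + c₁ * r) := by gcongr
      _ = 2 * (|a| * r) * (2 * lam₁ + c₁) := by ring
  have hsq : (|a| * r) ^ 2 = a ^ 2 * r ^ 2 := by rw [mul_pow, sq_abs]
  nlinarith [(abs_le.mp hC).2, sq_nonneg (|a| * r - (2 * lam₁ + c₁)), sq_nonneg (2 * lam₁ - c₁)]

lemma sum_sq_le_of_sum_sq_add_mul_le {p u ξ : κ → ℝ} {a lam₁ c₁ lam₂ : ℝ}
    (h : ∑ t, (p t + a * ξ t) ^ 2 ≤ 2 * ∑ t, u t * (p t + a * ξ t))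
    (hA : |∑ t, ξ t * p t| ≤ 2 * (lam₁ * √(∑ t, ξ t ^ 2)))
    (hB : |∑ t, u t * ξ t| ≤ c₁ * √(∑ t, ξ t ^ 2))
    (hC : |∑ t, u t * p t| ≤ 2 * lam₂) :
    ∑ t, p t ^ 2 ≤ 8 * lam₁ ^ 2 + 2 * c₁ ^ 2 + 4 * lam₂ := by
  refine le_of_add_two_mul_add_sq_mul_sq_le (a := a) ?_ hA hB hC
  rw [Real.sq_sqrt (sum_nonneg fun t _ => sq_nonneg _)]
  have hexp : ∑ t, (p t + a * ξ t) ^ 2 =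
      ∑ t, p t ^ 2 + 2 * a * ∑ t, ξ t * p t + a ^ 2 * ∑ t, ξ t ^ 2 := by
    simp only [mul_sum, ← sum_add_distrib]
    exact sum_congr rfl fun t _ => by ring
  have hlin : ∑ t, u t * (p t + a * ξ t) = ∑ t, u t * p t + a * ∑ t, u t * ξ t := by
    simp only [mul_sum, ← sum_add_distrib]
    exact sum_congr rfl fun t _ => by ring
  linarith

theorem simplex_regression_ell2_bound_general
    (T N : ℕ)
    (θ ξ u Y : Fin T → ℝ) (Z X : Fin T → Fin N → ℝ) (β w what : Fin N → ℝ)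
    (M : Matrix (Fin N) (Fin N) ℝ)
    (c₀ c₁ lam₁ lam₂ lam₃ : ℝ) (hc₀ : 0 < c₀)
    (hX : ∀ t i, X t i = θ t + Z t i + ξ t * β i)
    (hw1 : ∑ i, w i = 1) (hwnn : ∀ i, 0 ≤ w i)
    (hY : ∀ t, Y t = (∑ i, X t i * w i) + u t)
    (hwhat1 : ∑ i, what i = 1) (hwhatnn : ∀ i, 0 ≤ what i)
    (hmin : ∀ v : Fin N → ℝ, (∑ i, v i = 1) → (∀ i, 0 ≤ v i) →
      ∑ t, (Y t - ∑ i, X t i * what i) ^ 2 ≤ ∑ t, (Y t - ∑ i, X t i * v i) ^ 2)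
    (h1 : ∀ i, |∑ t, Z t i * ξ t| ≤ lam₁ * Real.sqrt (∑ t, (ξ t) ^ 2))
    (h2 : |∑ t, u t * ξ t| ≤ c₁ * Real.sqrt (∑ t, (ξ t) ^ 2))
    (h3 : ∀ i, |∑ t, Z t i * u t| ≤ lam₂)
    (h4 : ∀ i j, |(∑ t, Z t i * Z t j) - M i j| ≤ lam₃)
    (heig : ∀ δ : Fin N → ℝ,
      c₀⁻¹ * ∑ i, (δ i) ^ 2 ≤ (∑ i, ∑ j, δ i * (M i j / (T : ℝ)) * δ j) ∧
      (∑ i, ∑ j, δ i * (M i j / (T : ℝ)) * δ j) ≤ c₀ * ∑ i, (δ i) ^ 2) :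
    Real.sqrt (∑ i, (what i - w i) ^ 2)
      ≤ Real.sqrt ((c₀ / (T : ℝ)) *
          (8 * lam₁ ^ 2 + 2 * c₁ ^ 2 + 4 * lam₂ + 4 * lam₃)) := by
  have hw : w ∈ stdSimplex ℝ (Fin N) := ⟨hwnn, hw1⟩
  have hwhat : what ∈ stdSimplex ℝ (Fin N) := ⟨hwhatnn, hwhat1⟩
  have : Nonempty (Fin N) := nonempty_of_mem_stdSimplex hw
  set Δ : Fin N → ℝ := fun i => what i - w i
  have hΔ₁ : ∑ i, |Δ i| ≤ 2 := sum_abs_sub_le_two_of_mem_stdSimplex hwhat hw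
  have hΔ₀ : ∑ i, Δ i = 0 := by simp only [Δ, sum_sub_distrib, hwhat1, hw1, sub_self]
  have hbasic : ∑ t, (∑ i, X t i * Δ i) ^ 2 ≤ 2 * ∑ t, u t * ∑ i, X t i * Δ i :=
    sum_sq_le_two_mul_sum_mul_of_lsq hY (hmin w hw1 hwnn)
  simp only [sum_mul_eq_add_of_sum_eq_zero (hX _) hΔ₀] at hbasic
  have hZΔ : ∑ t, (∑ i, Z t i * Δ i) ^ 2 ≤ 8 * lam₁ ^ 2 + 2 * c₁ ^ 2 + 4 * lam₂ := by
    refine sum_sq_le_of_sum_sq_add_mul_le hbasic ?_ h2 ?_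
    · rw [sum_mul_sum_mul_comm]; exact abs_sum_mul_le_of_sum_abs_le hΔ₁ h1
    · rw [sum_mul_sum_mul_comm]; exact abs_sum_mul_le_of_sum_abs_le hΔ₁ h3
  have hdev : |∑ t, (∑ i, Z t i * Δ i) ^ 2 - ∑ i, ∑ j, Δ i * M i j * Δ j| ≤ 4 * lam₃ := by
    rw [sum_sq_sum_mul_eq_quadForm, ← quadForm_sub _ M]
    linarith [abs_quadForm_le_of_sum_abs_le hΔ₁ h4]
  have hMΔ : ∑ i, ∑ j, Δ i * M i j * Δ j ≤ 8 * lam₁ ^ 2 + 2 * c₁ ^ 2 + 4 * lam₂ + 4 * lam₃ := by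
    linarith [neg_abs_le (∑ t, (∑ i, Z t i * Δ i) ^ 2 - ∑ i, ∑ j, Δ i * M i j * Δ j)]
  have hlow : c₀⁻¹ * ∑ i, Δ i ^ 2 ≤ (∑ i, ∑ j, Δ i * M i j * Δ j) / T := by
    simpa only [mul_div_assoc', div_mul_eq_mul_div, ← sum_div] using (heig Δ).1
  refine Real.sqrt_le_sqrt ?_
  calc ∑ i, Δ i ^ 2 = c₀ * (c₀⁻¹ * ∑ i, Δ i ^ 2) := by field_simp
    _ ≤ c₀ * ((8 * lam₁ ^ 2 + 2 * c₁ ^ 2 + 4 * lam₂ + 4 * lam₃) / T) := by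
      gcongr; exact hlow.trans (by gcongr)
    _ = _ := by ring

/-- ℓ₂-error bound for the simplex-constrained (synthetic control)
least squares estimator under a common trend plus one sparse nonstationary
deviation (first part of Lemma A.1 of the paper). -/
theorem simplex_regression_ell2_bound
    (T N : ℕ) (hT : 0 < T)
    (θ ξ u Y : Fin T → ℝ) (Z X : Fin T → Fin N → ℝ) (β w what : Fin N → ℝ)
    (M : Matrix (Fin N) (Fin N) ℝ)
    (c₀ c₁ lam₁ lam₂ lam₃ : ℝ) (hc₀ : 0 < c₀)
    (hX : ∀ t i, X t i = θ t + Z t i + ξ t * β i)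
    (hw1 : ∑ i, w i = 1) (hwnn : ∀ i, 0 ≤ w i)
    (hY : ∀ t, Y t = (∑ i, X t i * w i) + u t)
    (hwhat1 : ∑ i, what i = 1) (hwhatnn : ∀ i, 0 ≤ what i)
    (hmin : ∀ v : Fin N → ℝ, (∑ i, v i = 1) → (∀ i, 0 ≤ v i) →
      ∑ t, (Y t - ∑ i, X t i * what i) ^ 2 ≤ ∑ t, (Y t - ∑ i, X t i * v i) ^ 2)
    (h1 : ∀ i, |∑ t, Z t i * ξ t| ≤ lam₁ * Real.sqrt (∑ t, (ξ t) ^ 2))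
    (h2 : |∑ t, u t * ξ t| ≤ c₁ * Real.sqrt (∑ t, (ξ t) ^ 2))
    (h3 : ∀ i, |∑ t, Z t i * u t| ≤ lam₂)
    (h4 : ∀ i j, |(∑ t, Z t i * Z t j) - M i j| ≤ lam₃)
    (heig : ∀ δ : Fin N → ℝ,
      c₀⁻¹ * ∑ i, (δ i) ^ 2 ≤ (∑ i, ∑ j, δ i * (M i j / (T : ℝ)) * δ j) ∧
      (∑ i, ∑ j, δ i * (M i j / (T : ℝ)) * δ j) ≤ c₀ * ∑ i, (δ i) ^ 2) :
    Real.sqrt (∑ i, (what i - w i) ^ 2)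
      ≤ Real.sqrt ((c₀ / (T : ℝ)) *
          (8 * lam₁ ^ 2 + 2 * c₁ ^ 2 + 4 * lam₂ + 4 * lam₃)) :=
  simplex_regression_ell2_bound_general T N θ ξ u Y Z X β w what M c₀ c₁ lam₁ lam₂ lam₃ hc₀ hX hw1
    hwnn hY hwhat1 hwhatnn hmin h1 h2 h3 h4 heig
end
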